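/- arXiv:1501.04058 — 4 statements merged into one kernel-verified Lean document; each statement's English description precedes it below -/
import Mathlib

section
/- Let E_d, E_a, W_d, W_a, P_max be positive reals. The maximum of the two-link rate function f(p,q) = W_d·log₂(1 + p/E_d) + W_a·log₂(1 + q/E_a) over the feasible set S = {(p,q) : p ≥ 0, q ≥ 0, p + q ≤ P_max} is attained at the waterfilling allocation p* = min(P_max, max(0, (W_d·P_max + W_d·E_a − W_a·E_d)/(W_a + W_d))) and q* = P_max − p*; that is, for every (p,q) ∈ S one has f(p,q) ≤ f(p*, q*). -/
/-- Tangent line bound for `logb 2`. -/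
lemma tangent_logb (x y : ℝ) (hx : 0 < x) (hy : 0 < y) :
    Real.logb 2 x ≤ Real.logb 2 y + (x - y) / (y * Real.log 2) := by
  have hl2 : 0 < Real.log 2 := Real.log_pos one_lt_two
  have h := Real.log_le_sub_one_of_pos (show 0 < x / y by positivity)
  rw [Real.log_div hx.ne' hy.ne'] at h
  have hlog : Real.log x ≤ Real.log y + (x - y) / y := by
    have hxy : x / y - 1 = (x - y) / y := by field_simp
    linarith [hxy ▸ h]
  unfold Real.logb
  rw [show (x - y) / (y * Real.log 2) = ((x - y) / y) / Real.log 2 by rw [div_div],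
    ← add_div]
  gcongr

/-- The key algebraic inequality at the clamped waterfilling point. -/
lemma waterfill_key (Ed Ea Wd Wa Pmax p q : ℝ)
    (hEd : 0 < Ed) (hEa : 0 < Ea) (hWd : 0 < Wd) (hWa : 0 < Wa) (hP : 0 < Pmax)
    (hp : 0 ≤ p) (hq : 0 ≤ q) (hpq : p + q ≤ Pmax) :
    Wd * (p - min Pmax (max 0 ((Wd * Pmax + Wd * Ea - Wa * Ed) / (Wa + Wd)))) *
        (Ea + (Pmax - min Pmax (max 0 ((Wd * Pmax + Wd * Ea - Wa * Ed) / (Wa + Wd))))) +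
      Wa * (q - (Pmax - min Pmax (max 0 ((Wd * Pmax + Wd * Ea - Wa * Ed) / (Wa + Wd))))) *
        (Ed + min Pmax (max 0 ((Wd * Pmax + Wd * Ea - Wa * Ed) / (Wa + Wd)))) ≤ 0 := by
  have hW : 0 < Wa + Wd := by linarith
  set t : ℝ := (Wd * Pmax + Wd * Ea - Wa * Ed) / (Wa + Wd) with ht
  rcases le_or_gt t 0 with h0 | h0
  · have hPz : min Pmax (max 0 t) = 0 := by
      rw [max_eq_left h0, min_eq_right hP.le]
    rw [hPz]
    have h1 : Wd * Pmax + Wd * Ea - Wa * Ed ≤ 0 := by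
      by_contra hc
      push_neg at hc
      have : 0 < t := by rw [ht]; positivity
      linarith
    have k1 : p * (Wd * Pmax + Wd * Ea - Wa * Ed) ≤ 0 :=
      mul_nonpos_of_nonneg_of_nonpos hp h1
    have k2 : Wa * Ed * (p + q - Pmax) ≤ 0 :=
      mul_nonpos_of_nonneg_of_nonpos (by positivity) (by linarith)
    nlinarith [k1, k2]
  · rcases le_or_gt Pmax t with h1 | h1
    · have hPz : min Pmax (max 0 t) = Pmax := by
        rw [max_eq_right h0.le, min_eq_left h1]
      rw [hPz]
      have h2 : Wa * (Ed + Pmax) ≤ Wd * Ea := by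
        have h3 : (Wa + Wd) * Pmax ≤ (Wa + Wd) * t := by nlinarith
        have h4 : (Wa + Wd) * t = Wd * Pmax + Wd * Ea - Wa * Ed := by
          rw [ht]; field_simp
        nlinarith
      have k1 : q * (Wa * (Ed + Pmax) - Wd * Ea) ≤ 0 :=
        mul_nonpos_of_nonneg_of_nonpos hq (by linarith)
      have k2 : Wd * Ea * (p + q - Pmax) ≤ 0 :=
        mul_nonpos_of_nonneg_of_nonpos (by positivity) (by linarith)
      nlinarith [k1, k2]
    · have hPt : min Pmax (max 0 t) = t := by
        rw [max_eq_right h0.le, min_eq_right h1.le]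
      rw [hPt]
      have h2 : (Wa + Wd) * t = Wd * Pmax + Wd * Ea - Wa * Ed := by
        rw [ht]; field_simp
      have hEdP : Ed + t = Wd * (Ed + Ea + Pmax) / (Wa + Wd) := by
        rw [eq_div_iff hW.ne']; nlinarith
      have hEaQ : Ea + (Pmax - t) = Wa * (Ed + Ea + Pmax) / (Wa + Wd) := by
        rw [eq_div_iff hW.ne']; nlinarith
      rw [hEdP, hEaQ]
      have heq : Wd * (p - t) * (Wa * (Ed + Ea + Pmax) / (Wa + Wd)) +
          Wa * (q - (Pmax - t)) * (Wd * (Ed + Ea + Pmax) / (Wa + Wd)) =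
          Wd * Wa * (Ed + Ea + Pmax) / (Wa + Wd) * (p + q - Pmax) := by ring
      rw [heq]
      exact mul_nonpos_of_nonneg_of_nonpos (by positivity) (by linarith)


/-- **Proposition 1 (waterfilling).** For positive reals `E_d, E_a, W_d, W_a, P_max`, the
two-link rate function `f(p,q) = W_d·log₂(1 + p/E_d) + W_a·log₂(1 + q/E_a)` over the feasible
set `S = {(p,q) : p ≥ 0, q ≥ 0, p + q ≤ P_max}` is maximized at the waterfilling allocation
`p* = min(P_max, max(0, (W_d·P_max + W_d·E_a − W_a·E_d)/(W_a + W_d)))`, `q* = P_max − p*`. -/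
theorem stmt_0 (Ed Ea Wd Wa Pmax : ℝ)
    (hEd : 0 < Ed) (hEa : 0 < Ea) (hWd : 0 < Wd) (hWa : 0 < Wa) (hP : 0 < Pmax) :
    ∀ p q : ℝ, 0 ≤ p → 0 ≤ q → p + q ≤ Pmax →
      Wd * Real.logb 2 (1 + p / Ed) + Wa * Real.logb 2 (1 + q / Ea) ≤
        Wd * Real.logb 2
            (1 + min Pmax (max 0 ((Wd * Pmax + Wd * Ea - Wa * Ed) / (Wa + Wd))) / Ed) +
          Wa * Real.logb 2
            (1 + (Pmax - min Pmax (max 0 ((Wd * Pmax + Wd * Ea - Wa * Ed) / (Wa + Wd)))) / Ea) := by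
  intro p q hp hq hpq
  have hl2 : 0 < Real.log 2 := Real.log_pos one_lt_two
  have hkey := waterfill_key Ed Ea Wd Wa Pmax p q hEd hEa hWd hWa hP hp hq hpq
  set P : ℝ := min Pmax (max 0 ((Wd * Pmax + Wd * Ea - Wa * Ed) / (Wa + Wd))) with hPdef
  have hP0 : 0 ≤ P := le_min hP.le (le_max_left _ _)
  have hPle : P ≤ Pmax := min_le_left _ _
  set Q : ℝ := Pmax - P with hQdef
  have hQ0 : 0 ≤ Q := by rw [hQdef]; linarith
  have hA : 0 < Ed + P := by linarith
  have hB : 0 < Ea + Q := by linarith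
  have hx1 : (0:ℝ) < 1 + p / Ed := by positivity
  have hy1 : (0:ℝ) < 1 + P / Ed := by positivity
  have hx2 : (0:ℝ) < 1 + q / Ea := by positivity
  have hy2 : (0:ℝ) < 1 + Q / Ea := by positivity
  have t1 := tangent_logb _ _ hx1 hy1
  have t2 := tangent_logb _ _ hx2 hy2
  have e1 : ((1 + p / Ed) - (1 + P / Ed)) / ((1 + P / Ed) * Real.log 2) =
      (p - P) / ((Ed + P) * Real.log 2) := by
    rw [div_eq_div_iff (by positivity) (by positivity)]
    field_simp
    ring
  have e2 : ((1 + q / Ea) - (1 + Q / Ea)) / ((1 + Q / Ea) * Real.log 2) =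
      (q - Q) / ((Ea + Q) * Real.log 2) := by
    rw [div_eq_div_iff (by positivity) (by positivity)]
    field_simp
    ring
  rw [e1] at t1
  rw [e2] at t2
  have hrem : Wd * ((p - P) / ((Ed + P) * Real.log 2)) +
      Wa * ((q - Q) / ((Ea + Q) * Real.log 2)) ≤ 0 := by
    have heq : Wd * ((p - P) / ((Ed + P) * Real.log 2)) +
        Wa * ((q - Q) / ((Ea + Q) * Real.log 2)) =
        (Wd * (p - P) * (Ea + Q) + Wa * (q - Q) * (Ed + P)) /
          ((Ed + P) * (Ea + Q) * Real.log 2) := by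
      field_simp
    rw [heq]
    exact div_nonpos_of_nonpos_of_nonneg hkey (by positivity)
  calc Wd * Real.logb 2 (1 + p / Ed) + Wa * Real.logb 2 (1 + q / Ea)
      ≤ Wd * (Real.logb 2 (1 + P / Ed) + (p - P) / ((Ed + P) * Real.log 2)) +
        Wa * (Real.logb 2 (1 + Q / Ea) + (q - Q) / ((Ea + Q) * Real.log 2)) := by
        gcongr
    _ = Wd * Real.logb 2 (1 + P / Ed) + Wa * Real.logb 2 (1 + Q / Ea) +
        (Wd * ((p - P) / ((Ed + P) * Real.log 2)) +
         Wa * ((q - Q) / ((Ea + Q) * Real.log 2))) := by ring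
    _ ≤ Wd * Real.logb 2 (1 + P / Ed) + Wa * Real.logb 2 (1 + Q / Ea) := by linarith
end

section
/- Let E_d, W_d, W_a, P_max be positive reals, and for E_a > 0 let τ(E_a) denote the supremum of f(p,q) = W_d·log₂(1 + p/E_d) + W_a·log₂(1 + q/E_a) over the feasible set S = {(p,q) : p ≥ 0, q ≥ 0, p + q ≤ P_max}. If 0 < E_b < E_r and moreover W_d·E_b < W_a·(P_max + E_d) (so that the waterfilling allocation for interference E_b places strictly positive power on the second link), then τ(E_b) > τ(E_r), i.e., the peak rate via the access point with strictly lower effective interference is strictly larger. -/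
private lemma log_lower {t : ℝ} (ht : 0 < t) : t / (1 + t) < Real.log (1 + t) := by
  have h1t : (0:ℝ) < 1 + t := by linarith
  have h := Real.log_lt_sub_one_of_pos (x := (1 + t)⁻¹) (by positivity)
    (by
      intro h
      have h1 : (1:ℝ) + t = 1 := by
        have := congrArg (fun y => y⁻¹) h
        simpa using this
      linarith)
  rw [Real.log_inv] at h
  have he : (1 + t)⁻¹ - 1 = -(t / (1 + t)) := by field_simp; ring
  rw [he] at h
  linarith

private lemma log_upper {a s : ℝ} (ha : 0 < a) (hs : 0 ≤ s) :
    Real.log (a + s) - Real.log a ≤ s / a := by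
  have has : (0:ℝ) < a + s := by linarith
  have h := Real.log_le_sub_one_of_pos (x := (a + s) / a) (by positivity)
  rw [Real.log_div (by positivity) (ne_of_gt ha)] at h
  have he : (a + s) / a - 1 = s / a := by field_simp; ring
  linarith

/-- Key strict inequality: moving a small amount `q0` of power to the second link
strictly increases the rate under the waterfilling condition. -/
private lemma key_ineq (Ed Wd Wa Pmax Eb q0 : ℝ)
    (hEd : 0 < Ed) (hWd : 0 < Wd) (hWa : 0 < Wa) (hEb : 0 < Eb)
    (hq0 : 0 < q0) (hq0P : q0 ≤ Pmax)
    (hcond : Wd * (Eb + q0) < Wa * (Ed + Pmax - q0)) :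
    Wd * Real.logb 2 (1 + Pmax / Ed) <
      Wd * Real.logb 2 (1 + (Pmax - q0) / Ed) + Wa * Real.logb 2 (1 + q0 / Eb) := by
  have hP : 0 < Pmax := lt_of_lt_of_le hq0 hq0P
  have hden : (0:ℝ) < Ed + Pmax - q0 := by linarith
  -- upper bound on the loss of link 1
  have hup : Real.log (1 + Pmax / Ed) - Real.log (1 + (Pmax - q0) / Ed)
      ≤ q0 / (Ed + Pmax - q0) := by
    have e1 : (1:ℝ) + Pmax / Ed = ((Ed + Pmax - q0) + q0) / Ed := by
      field_simp; ring
    have e2 : (1:ℝ) + (Pmax - q0) / Ed = (Ed + Pmax - q0) / Ed := by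
      field_simp; ring
    rw [e1, e2, Real.log_div (by positivity) (ne_of_gt hEd),
      Real.log_div (by positivity) (ne_of_gt hEd)]
    have := log_upper (a := Ed + Pmax - q0) (s := q0) hden (le_of_lt hq0)
    linarith
  -- lower bound on the gain of link 2
  have hlo : q0 / (Eb + q0) < Real.log (1 + q0 / Eb) := by
    have h := log_lower (t := q0 / Eb) (by positivity)
    have e : (q0 / Eb) / (1 + q0 / Eb) = q0 / (Eb + q0) := by
      rw [div_eq_div_iff (by positivity) (by positivity)]
      field_simp
    rw [e] at h
    exact h
  -- middle comparison
  have hmid : Wd * (q0 / (Ed + Pmax - q0)) < Wa * (q0 / (Eb + q0)) := by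
    rw [mul_div_assoc', mul_div_assoc', div_lt_div_iff₀ hden (by positivity)]
    nlinarith [mul_lt_mul_of_pos_right hcond hq0]
  have L : (0:ℝ) < Real.log 2 := Real.log_pos one_lt_two
  have key : Wd * Real.log (1 + Pmax / Ed) <
      Wd * Real.log (1 + (Pmax - q0) / Ed) + Wa * Real.log (1 + q0 / Eb) := by
    nlinarith [mul_le_mul_of_nonneg_left hup (le_of_lt hWd),
      mul_lt_mul_of_pos_left hlo hWa]
  simp only [Real.logb]
  rw [mul_div_assoc', mul_div_assoc', mul_div_assoc', ← add_div,
    div_lt_div_iff_of_pos_right L]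
  exact key

/-- **Corollary 1 (strict form).** For the peak two-link rate
`τ(E_a) = sup_{(p,q) ∈ S} W_d·log₂(1+p/E_d) + W_a·log₂(1+q/E_a)`,
if `0 < E_b < E_r` and `W_d·E_b < W_a·(P_max + E_d)` (so the waterfilling allocation for
interference `E_b` puts strictly positive power on the second link), then `τ(E_b) > τ(E_r)`. -/
theorem stmt_3 (Ed Wd Wa Pmax : ℝ)
    (hEd : 0 < Ed) (hWd : 0 < Wd) (hWa : 0 < Wa) (hP : 0 < Pmax)
    (Eb Er : ℝ) (hEb : 0 < Eb) (hbr : Eb < Er)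
    (hwf : Wd * Eb < Wa * (Pmax + Ed)) :
    sSup {y : ℝ | ∃ p q : ℝ, 0 ≤ p ∧ 0 ≤ q ∧ p + q ≤ Pmax ∧
        y = Wd * Real.logb 2 (1 + p / Ed) + Wa * Real.logb 2 (1 + q / Er)} <
      sSup {y : ℝ | ∃ p q : ℝ, 0 ≤ p ∧ 0 ≤ q ∧ p + q ≤ Pmax ∧
        y = Wd * Real.logb 2 (1 + p / Ed) + Wa * Real.logb 2 (1 + q / Eb)} := by
  have hEr : 0 < Er := lt_trans hEb hbr
  set A := {y : ℝ | ∃ p q : ℝ, 0 ≤ p ∧ 0 ≤ q ∧ p + q ≤ Pmax ∧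
      y = Wd * Real.logb 2 (1 + p / Ed) + Wa * Real.logb 2 (1 + q / Er)} with hA
  set B := {y : ℝ | ∃ p q : ℝ, 0 ≤ p ∧ 0 ≤ q ∧ p + q ≤ Pmax ∧
      y = Wd * Real.logb 2 (1 + p / Ed) + Wa * Real.logb 2 (1 + q / Eb)} with hB
  -- B is bounded above
  have hBbdd : BddAbove B := by
    refine ⟨Wd * Real.logb 2 (1 + Pmax / Ed) + Wa * Real.logb 2 (1 + Pmax / Eb), ?_⟩
    rintro y ⟨p, q, hp, hq, hpq, rfl⟩
    have hpP : p ≤ Pmax := by linarith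
    have hqP : q ≤ Pmax := by linarith
    have h1 : Real.logb 2 (1 + p / Ed) ≤ Real.logb 2 (1 + Pmax / Ed) :=
      Real.logb_le_logb_of_le one_lt_two (by positivity) (by gcongr)
    have h2 : Real.logb 2 (1 + q / Eb) ≤ Real.logb 2 (1 + Pmax / Eb) :=
      Real.logb_le_logb_of_le one_lt_two (by positivity) (by gcongr)
    nlinarith
  -- the feasible set and the Er-rate function
  set S : Set (ℝ × ℝ) := {x | 0 ≤ x.1 ∧ 0 ≤ x.2 ∧ x.1 + x.2 ≤ Pmax} with hS
  set f : ℝ × ℝ → ℝ :=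
    fun x => Wd * Real.logb 2 (1 + x.1 / Ed) + Wa * Real.logb 2 (1 + x.2 / Er) with hf
  have hScomp : IsCompact S := by
    have hsub : S ⊆ Set.Icc (0:ℝ) Pmax ×ˢ Set.Icc (0:ℝ) Pmax := by
      rintro ⟨p, q⟩ ⟨hp, hq, hpq⟩
      exact ⟨⟨hp, by linarith⟩, ⟨hq, by linarith⟩⟩
    have hclosed : IsClosed S := by
      have h1 : IsClosed {x : ℝ × ℝ | 0 ≤ x.1} :=
        isClosed_le continuous_const continuous_fst
      have h2 : IsClosed {x : ℝ × ℝ | 0 ≤ x.2} :=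
        isClosed_le continuous_const continuous_snd
      have h3 : IsClosed {x : ℝ × ℝ | x.1 + x.2 ≤ Pmax} :=
        isClosed_le (continuous_fst.add continuous_snd) continuous_const
      have hSeq : S = {x : ℝ × ℝ | 0 ≤ x.1} ∩ ({x | 0 ≤ x.2} ∩ {x | x.1 + x.2 ≤ Pmax}) := by
        ext x; simp [hS, and_assoc]
      rw [hSeq]
      exact h1.inter (h2.inter h3)
    exact (isCompact_Icc.prod isCompact_Icc).of_isClosed_subset hclosed hsub
  have hcont : ContinuousOn f S := by
    simp only [hf, Real.logb]
    apply ContinuousOn.add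
    · apply ContinuousOn.mul continuousOn_const
      apply ContinuousOn.div_const
      apply ContinuousOn.log
      · exact (continuous_const.add (continuous_fst.div_const Ed)).continuousOn
      · rintro ⟨p, q⟩ ⟨hp, hq, hpq⟩
        have : (0:ℝ) ≤ p / Ed := by positivity
        simp only []
        intro h0
        linarith [h0 ▸ this]
    · apply ContinuousOn.mul continuousOn_const
      apply ContinuousOn.div_const
      apply ContinuousOn.log
      · exact (continuous_const.add (continuous_snd.div_const Er)).continuousOn
      · rintro ⟨p, q⟩ ⟨hp, hq, hpq⟩
        have : (0:ℝ) ≤ q / Er := by positivity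
        simp only []
        intro h0
        linarith [h0 ▸ this]
  have hSne : S.Nonempty := ⟨(0, 0), le_refl 0, le_refl 0, by simpa using le_of_lt hP⟩
  obtain ⟨z, hzS, hmax⟩ := hScomp.exists_isMaxOn hSne hcont
  obtain ⟨hz1, hz2, hz12⟩ := hzS
  -- sSup A ≤ f z
  have hAle : sSup A ≤ f z := by
    apply csSup_le
    · exact ⟨Wd * Real.logb 2 (1 + 0 / Ed) + Wa * Real.logb 2 (1 + 0 / Er),
        0, 0, le_refl 0, le_refl 0, by simpa using le_of_lt hP, rfl⟩
    · rintro y ⟨p, q, hp, hq, hpq, rfl⟩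
      exact hmax (show (p, q) ∈ S from ⟨hp, hq, hpq⟩)
  refine lt_of_le_of_lt hAle ?_
  -- now show f z < sSup B
  rcases eq_or_lt_of_le hz2 with hq0 | hq0
  · -- z.2 = 0 : use the waterfilling move
    set D := Wa * (Pmax + Ed) - Wd * Eb with hD
    have hDpos : 0 < D := by simp only [hD]; linarith
    set q0 := min Pmax (D / (2 * (Wa + Wd))) with hq0def
    have hq0pos : 0 < q0 := lt_min hP (by positivity)
    have hq0P : q0 ≤ Pmax := min_le_left _ _
    have hq0D : q0 ≤ D / (2 * (Wa + Wd)) := min_le_right _ _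
    have hcond : Wd * (Eb + q0) < Wa * (Ed + Pmax - q0) := by
      have h1 : (Wa + Wd) * q0 ≤ D / 2 := by
        have hWW : (0:ℝ) < Wa + Wd := by positivity
        calc (Wa + Wd) * q0 ≤ (Wa + Wd) * (D / (2 * (Wa + Wd))) :=
              mul_le_mul_of_nonneg_left hq0D (le_of_lt hWW)
          _ = D / 2 := by field_simp
      linarith
    have hkey := key_ineq Ed Wd Wa Pmax Eb q0 hEd hWd hWa hEb hq0pos hq0P hcond
    -- f z ≤ Wd * logb 2 (1 + Pmax/Ed)
    have hfz : f z ≤ Wd * Real.logb 2 (1 + Pmax / Ed) := by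
      have hz1P : z.1 ≤ Pmax := by linarith
      have h1 : Real.logb 2 (1 + z.1 / Ed) ≤ Real.logb 2 (1 + Pmax / Ed) :=
        Real.logb_le_logb_of_le one_lt_two (by positivity) (by gcongr)
      have h2 : Real.logb 2 (1 + z.2 / Er) = 0 := by
        rw [← hq0]
        simp
      simp only [hf]
      rw [h2]
      nlinarith
    have hmemB : Wd * Real.logb 2 (1 + (Pmax - q0) / Ed) + Wa * Real.logb 2 (1 + q0 / Eb) ∈ B := by
      exact ⟨Pmax - q0, q0, by linarith, le_of_lt hq0pos, by linarith, rfl⟩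
    calc f z ≤ Wd * Real.logb 2 (1 + Pmax / Ed) := hfz
      _ < Wd * Real.logb 2 (1 + (Pmax - q0) / Ed) + Wa * Real.logb 2 (1 + q0 / Eb) := hkey
      _ ≤ sSup B := le_csSup hBbdd hmemB
  · -- 0 < z.2 : same allocation is strictly better with Eb
    have hmemB : Wd * Real.logb 2 (1 + z.1 / Ed) + Wa * Real.logb 2 (1 + z.2 / Eb) ∈ B :=
      ⟨z.1, z.2, hz1, hz2, hz12, rfl⟩
    have hlt : Real.logb 2 (1 + z.2 / Er) < Real.logb 2 (1 + z.2 / Eb) := by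
      have hdiv : z.2 / Er < z.2 / Eb := div_lt_div_of_pos_left hq0 hEb hbr
      apply Real.logb_lt_logb one_lt_two
      · positivity
      · linarith
    have : f z < Wd * Real.logb 2 (1 + z.1 / Ed) + Wa * Real.logb 2 (1 + z.2 / Eb) := by
      simp only [hf]
      nlinarith
    exact lt_of_lt_of_le this (le_csSup hBbdd hmemB)
end

section
/- Let E_d, E_a, W_d, W_a, P_max be positive reals and let g(p) = W_d·log₂(1 + p/E_d) + W_a·log₂(1 + (P_max − p)/E_a) on [0, P_max]. (i) If W_d·E_a − W_a·E_d ≥ W_a·P_max, then g is maximized at p = P_max (all power on the first link), i.e., g(p) ≤ g(P_max) for all p ∈ [0, P_max]. (ii) If W_a·E_d − W_d·E_a ≥ W_d·P_max, then g is maximized at p = 0 (all power on the second link), i.e., g(p) ≤ g(0) for all p ∈ [0, P_max]. -/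
lemma mono_aux (Ed Ea Wd Wa Pmax : ℝ)
    (hEd : 0 < Ed) (hEa : 0 < Ea) (hWd : 0 < Wd) (hWa : 0 < Wa) (hP : 0 < Pmax)
    (h : Wd * Ea - Wa * Ed ≥ Wa * Pmax) :
    MonotoneOn (fun p => Wd * Real.logb 2 (1 + p / Ed) + Wa * Real.logb 2 (1 + (Pmax - p) / Ea))
      (Set.Icc 0 Pmax) := by
  have hlog2 : (0:ℝ) < Real.log 2 := Real.log_pos one_lt_two
  -- rewrite logb as log / log 2
  have hD : ∀ x ∈ Set.Icc (0:ℝ) Pmax,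
      HasDerivAt (fun p => Wd * Real.logb 2 (1 + p / Ed) + Wa * Real.logb 2 (1 + (Pmax - p) / Ea))
        (Wd / (Real.log 2 * (Ed + x)) - Wa / (Real.log 2 * (Ea + (Pmax - x)))) x := by
    intro x hx
    obtain ⟨hx0, hx1⟩ := hx
    have h1 : (0:ℝ) < 1 + x / Ed := by positivity
    have h2 : (0:ℝ) < 1 + (Pmax - x) / Ea := by
      have : 0 ≤ (Pmax - x) / Ea := by
        apply div_nonneg (by linarith) hEa.le
      linarith
    have d1 : HasDerivAt (fun p : ℝ => 1 + p / Ed) (1 / Ed) x := by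
      simpa using ((hasDerivAt_id x).div_const Ed).const_add 1
    have d2 : HasDerivAt (fun p : ℝ => 1 + (Pmax - p) / Ea) (-(1 / Ea)) x := by
      have : HasDerivAt (fun p : ℝ => Pmax - p) (-1) x := by
        simpa using (hasDerivAt_id x).const_sub Pmax
      simpa [neg_div] using (this.div_const Ea).const_add 1
    have l1 : HasDerivAt (fun p : ℝ => Real.log (1 + p / Ed)) ((1 / Ed) / (1 + x / Ed)) x :=
      d1.log h1.ne'
    have l2 : HasDerivAt (fun p : ℝ => Real.log (1 + (Pmax - p) / Ea))
        ((-(1 / Ea)) / (1 + (Pmax - x) / Ea)) x := d2.log h2.ne'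
    have key : HasDerivAt
        (fun p => Wd * (Real.log (1 + p / Ed) / Real.log 2)
          + Wa * (Real.log (1 + (Pmax - p) / Ea) / Real.log 2))
        (Wd * ((1 / Ed) / (1 + x / Ed) / Real.log 2)
          + Wa * ((-(1 / Ea)) / (1 + (Pmax - x) / Ea) / Real.log 2)) x :=
      ((l1.div_const _).const_mul Wd).add ((l2.div_const _).const_mul Wa)
    have : (Wd * ((1 / Ed) / (1 + x / Ed) / Real.log 2)
          + Wa * ((-(1 / Ea)) / (1 + (Pmax - x) / Ea) / Real.log 2))
        = Wd / (Real.log 2 * (Ed + x)) - Wa / (Real.log 2 * (Ea + (Pmax - x))) := by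
      field_simp
      ring
    rw [this] at key
    simpa only [Real.logb, Real.log_div, div_eq_mul_inv] using key
  apply monotoneOn_of_deriv_nonneg (convex_Icc 0 Pmax)
  · exact fun x hx => (hD x hx).continuousAt.continuousWithinAt
  · intro x hx
    rw [interior_Icc] at hx
    exact ((hD x ⟨hx.1.le, hx.2.le⟩).differentiableAt).differentiableWithinAt
  · intro x hx
    rw [interior_Icc] at hx
    rw [((hD x ⟨hx.1.le, hx.2.le⟩)).deriv]
    rw [sub_nonneg, div_le_div_iff₀ (mul_pos hlog2 (by linarith [hx.2]))
      (mul_pos hlog2 (by linarith [hx.1]))]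
    have hkey : Wa * (Ed + x) ≤ Wd * (Ea + (Pmax - x)) := by
      nlinarith [mul_nonneg hWa.le (sub_nonneg.mpr hx.2.le),
        mul_nonneg hWd.le (sub_nonneg.mpr hx.2.le)]
    rw [mul_left_comm, mul_left_comm Wd]
    exact mul_le_mul_of_nonneg_left hkey hlog2.le

/-- **Boundary (corner) cases of the KKT analysis.** For
`g(p) = W_d·log₂(1 + p/E_d) + W_a·log₂(1 + (P_max − p)/E_a)` on `[0, P_max]`:
(i) if `W_d·E_a − W_a·E_d ≥ W_a·P_max` then `g` is maximized at `p = P_max`;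
(ii) if `W_a·E_d − W_d·E_a ≥ W_d·P_max` then `g` is maximized at `p = 0`. -/
theorem stmt_7 (Ed Ea Wd Wa Pmax : ℝ)
    (hEd : 0 < Ed) (hEa : 0 < Ea) (hWd : 0 < Wd) (hWa : 0 < Wa) (hP : 0 < Pmax) :
    (Wd * Ea - Wa * Ed ≥ Wa * Pmax →
      ∀ p ∈ Set.Icc 0 Pmax,
        Wd * Real.logb 2 (1 + p / Ed) + Wa * Real.logb 2 (1 + (Pmax - p) / Ea) ≤
          Wd * Real.logb 2 (1 + Pmax / Ed) + Wa * Real.logb 2 (1 + (Pmax - Pmax) / Ea)) ∧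
    (Wa * Ed - Wd * Ea ≥ Wd * Pmax →
      ∀ p ∈ Set.Icc 0 Pmax,
        Wd * Real.logb 2 (1 + p / Ed) + Wa * Real.logb 2 (1 + (Pmax - p) / Ea) ≤
          Wd * Real.logb 2 (1 + (0 : ℝ) / Ed) + Wa * Real.logb 2 (1 + (Pmax - 0) / Ea)) := by
  constructor
  · intro h p hp
    exact mono_aux Ed Ea Wd Wa Pmax hEd hEa hWd hWa hP h hp
      (Set.right_mem_Icc.mpr hP.le) hp.2
  · intro h p hp
    have hq : Pmax - p ∈ Set.Icc (0:ℝ) Pmax := ⟨by linarith [hp.2], by linarith [hp.1]⟩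
    have := mono_aux Ea Ed Wa Wd Pmax hEa hEd hWa hWd hP h hq
      (Set.right_mem_Icc.mpr hP.le) hq.2
    simp only [sub_sub_cancel, sub_self, sub_zero] at this ⊢
    linarith
end

section
/- Let n be a positive natural number, let M be an n×n real matrix with nonnegative entries whose complex extension has spectral radius strictly less than 1, and let N ∈ ℝⁿ. Let S : ℕ → Set (Fin n) be any sequence of update sets such that every coordinate i ∈ Fin n belongs to S(k) for infinitely many k. Define the asynchronous iteration P(0) = P₀ ∈ ℝⁿ and, for each coordinate i, P(k+1)ᵢ = (N − M·P(k))ᵢ if i ∈ S(k), and P(k+1)ᵢ = P(k)ᵢ otherwise. Then P(k) converges as k → ∞ to the unique vector P* satisfying P* + M·P* = N, regardless of P₀ and of the choice of update sets. -/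
open Filter Topology Finset
open scoped ENNReal NNReal

attribute [local instance] Matrix.linftyOpNormedRing Matrix.linftyOpNormedAlgebra
  Matrix.linftyOpNormedAddCommGroup

lemma aux_pow_nonneg {n : ℕ} (M : Matrix (Fin n) (Fin n) ℝ) (hM : ∀ i j, 0 ≤ M i j) :
    ∀ m i j, 0 ≤ (M ^ m) i j := by
  intro m
  induction m with
  | zero => intro i j; by_cases h : i = j <;> simp [Matrix.one_apply, h]
  | succ m ih =>
    intro i j
    rw [pow_succ, Matrix.mul_apply]
    exact Finset.sum_nonneg fun k _ => mul_nonneg (ih i k) (hM k j)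

lemma aux_gelfand {n : ℕ} (M : Matrix (Fin n) (Fin n) ℝ) (hM : ∀ i j, 0 ≤ M i j)
    (hρ : spectralRadius ℂ (M.map (fun x : ℝ => (x : ℂ))) < 1) :
    ∃ m, 1 ≤ m ∧ ∃ c : ℝ, 0 ≤ c ∧ c < 1 ∧ ∀ i, ∑ j, (M ^ m) i j ≤ c := by
  have hC : CompleteSpace (Matrix (Fin n) (Fin n) ℂ) :=
    by infer_instance
  set A : Matrix (Fin n) (Fin n) ℂ := M.map (fun x : ℝ => (x : ℂ)) with hA
  have h := spectrum.pow_nnnorm_pow_one_div_tendsto_nhds_spectralRadius A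
  have h2 := (h.eventually_lt_const hρ).and (eventually_ge_atTop 1)
  obtain ⟨m, hm1, hm2⟩ := h2.exists
  have hnorm : ‖A ^ m‖₊ < 1 := by
    by_contra hc
    push_neg at hc
    have : (1 : ℝ≥0∞) ≤ ((‖A ^ m‖₊ : ℝ≥0∞)) ^ (1 / (m : ℝ)) := by
      calc (1 : ℝ≥0∞) = (1 : ℝ≥0∞) ^ (1 / (m : ℝ)) := (ENNReal.one_rpow _).symm
        _ ≤ _ := ENNReal.rpow_le_rpow (by exact_mod_cast hc) (by positivity)
    exact absurd hm1 this.not_gt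
  refine ⟨m, hm2, ‖A ^ m‖, norm_nonneg _, ?_, ?_⟩
  · exact_mod_cast hnorm
  · intro i
    have hmap : A ^ m = (M ^ m).map (fun x : ℝ => (x : ℂ)) := by
      have : A = (algebraMap ℝ ℂ).mapMatrix M := rfl
      rw [this, ← map_pow]
      rfl
    have hle : ∑ j, ‖(A ^ m) i j‖₊ ≤ ‖A ^ m‖₊ := by
      rw [Matrix.linfty_opNNNorm_def]
      exact Finset.le_sup (f := fun i => ∑ j, ‖(A ^ m) i j‖₊) (Finset.mem_univ i)
    have : ∑ j, ‖(A ^ m) i j‖ ≤ ‖A ^ m‖ := by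
      have h2 := (NNReal.coe_le_coe).mpr hle
      simpa [NNReal.coe_sum, coe_nnnorm] using h2
    calc ∑ j, (M ^ m) i j = ∑ j, ‖(A ^ m) i j‖ := by
          refine Finset.sum_congr rfl fun j _ => ?_
          rw [hmap]
          simp [Matrix.map_apply, Complex.norm_real, abs_of_nonneg (aux_pow_nonneg M hM m i j)]
      _ ≤ ‖A ^ m‖ := this

lemma aux_weight {n : ℕ} (hn : 0 < n) (M : Matrix (Fin n) (Fin n) ℝ) (hM : ∀ i j, 0 ≤ M i j)
    (hρ : spectralRadius ℂ (M.map (fun x : ℝ => (x : ℂ))) < 1) :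
    ∃ (w : Fin n → ℝ) (γ : ℝ), (∀ i, 1 ≤ w i) ∧ 0 ≤ γ ∧ γ < 1 ∧
      ∀ i, M.mulVec w i ≤ γ * w i := by
  obtain ⟨m, hm1, c, hc0, hc1, hc⟩ := aux_gelfand M hM hρ
  haveI : Nonempty (Fin n) := ⟨⟨0, hn⟩⟩
  set w : Fin n → ℝ := fun i => ∑ j ∈ Finset.range m, ∑ k, (M ^ j) i k with hw
  have hterm : ∀ j i, 0 ≤ ∑ k, (M ^ j) i k :=
    fun j i => Finset.sum_nonneg fun k _ => aux_pow_nonneg M hM j i k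
  have hw1 : ∀ i, 1 ≤ w i := by
    intro i
    have h0 : ∑ k, (M ^ 0) i k = 1 := by simp [Matrix.one_apply]
    calc (1 : ℝ) = ∑ k, (M ^ 0) i k := h0.symm
      _ ≤ w i := Finset.single_le_sum (f := fun j => ∑ k, (M ^ j) i k)
            (fun j _ => hterm j i) (Finset.mem_range.mpr hm1)
  -- M *ᵥ w = w - 1 + rowsum (M^m)
  have hMw : ∀ i, M.mulVec w i = w i - 1 + ∑ k, (M ^ m) i k := by
    intro i
    have h1 : ∀ (t : ℕ) (k : Fin n), (M ^ (t+1)) i k = ∑ j, M i j * (M ^ t) j k := by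
      intro t k
      rw [pow_succ', Matrix.mul_apply]
    have expand : M.mulVec w i = ∑ t ∈ Finset.range m, ∑ k, (M ^ (t+1)) i k := by
      calc M.mulVec w i = ∑ j, M i j * ∑ t ∈ Finset.range m, ∑ k, (M ^ t) j k := by
            rw [Matrix.mulVec, dotProduct]
        _ = ∑ j, ∑ t ∈ Finset.range m, ∑ k, M i j * (M ^ t) j k := by
            simp_rw [Finset.mul_sum]
        _ = ∑ t ∈ Finset.range m, ∑ j, ∑ k, M i j * (M ^ t) j k := Finset.sum_comm
        _ = ∑ t ∈ Finset.range m, ∑ k, ∑ j, M i j * (M ^ t) j k :=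
            Finset.sum_congr rfl fun t _ => Finset.sum_comm
        _ = ∑ t ∈ Finset.range m, ∑ k, (M ^ (t+1)) i k := by simp_rw [h1]
    have hf := Finset.sum_range_succ' (fun t => ∑ k, (M ^ t) i k) m
    have hg := Finset.sum_range_succ (fun t => ∑ k, (M ^ t) i k) m
    have h0 : ∑ k, (M ^ 0) i k = 1 := by simp [Matrix.one_apply]
    have hwi : w i = ∑ t ∈ Finset.range m, ∑ k, (M ^ t) i k := rfl
    rw [expand, hwi]
    linarith
  set W : ℝ := Finset.univ.sup' Finset.univ_nonempty w with hW
  have hWw : ∀ i, w i ≤ W := fun i => Finset.le_sup' w (Finset.mem_univ i)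
  have hW1 : 1 ≤ W := le_trans (hw1 (Classical.arbitrary _)) (hWw _)
  have hWpos : 0 < W := lt_of_lt_of_le one_pos hW1
  refine ⟨w, 1 - (1 - c) / W, hw1, ?_, ?_, ?_⟩
  · have : (1 - c) / W ≤ 1 := by
      rw [div_le_one hWpos]; linarith
    linarith
  · have : 0 < (1 - c) / W := div_pos (by linarith) hWpos
    linarith
  · intro i
    have h1 : M.mulVec w i ≤ w i - (1 - c) := by
      have := hc i
      rw [hMw i]; linarith
    have h2 : (1 - c) * (w i / W) ≤ (1 - c) * 1 :=
      mul_le_mul_of_nonneg_left (by rw [div_le_one hWpos]; exact hWw i) (by linarith)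
    have h3 : (1 - c) / W * w i ≤ 1 - c := by
      rw [div_mul_eq_mul_div, mul_comm]
      calc w i * (1 - c) / W = (1 - c) * (w i / W) := by ring
        _ ≤ (1 - c) * 1 := h2
        _ = 1 - c := mul_one _
    calc M.mulVec w i ≤ w i - (1 - c) := h1
      _ ≤ w i - (1 - c) / W * w i := by linarith
      _ = (1 - (1 - c) / W) * w i := by ring

lemma aux_key {n : ℕ} (M : Matrix (Fin n) (Fin n) ℝ) (hM : ∀ i j, 0 ≤ M i j)
    (w : Fin n → ℝ) (γ : ℝ) (hγ0 : 0 ≤ γ) (hMw : ∀ i, M.mulVec w i ≤ γ * w i)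
    (x : Fin n → ℝ) (D : ℝ) (hD : 0 ≤ D) (hx : ∀ j, |x j| ≤ D * w j) (i : Fin n) :
    |M.mulVec x i| ≤ γ * D * w i := by
  have habs : |M.mulVec x i| ≤ ∑ j, M i j * |x j| := by
    rw [Matrix.mulVec, dotProduct]
    refine (Finset.abs_sum_le_sum_abs _ _).trans ?_
    refine Finset.sum_le_sum fun j _ => ?_
    rw [abs_mul, abs_of_nonneg (hM i j)]
  calc |M.mulVec x i| ≤ ∑ j, M i j * |x j| := habs
    _ ≤ ∑ j, M i j * (D * w j) :=
        Finset.sum_le_sum fun j _ => mul_le_mul_of_nonneg_left (hx j) (hM i j)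
    _ = D * ∑ j, M i j * w j := by rw [Finset.mul_sum]; exact Finset.sum_congr rfl fun j _ => by ring
    _ = D * M.mulVec w i := by rw [Matrix.mulVec, dotProduct]
    _ ≤ D * (γ * w i) := mul_le_mul_of_nonneg_left (hMw i) hD
    _ = γ * D * w i := by ring

/-- **Theorem 2 (convergence of asynchronous power updates).** Let `M` be a nonnegative real
`n × n` matrix whose complex extension has spectral radius `< 1`, and let `S(k)` be update sets
such that every coordinate is updated infinitely often. If
`P(k+1)ᵢ = (N − M·P(k))ᵢ` for `i ∈ S(k)` and `P(k+1)ᵢ = P(k)ᵢ` otherwise, then `P(k)`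
converges to the unique `P*` with `P* + M·P* = N`, for every initial vector and every choice
of update sets. -/
theorem stmt_14 (n : ℕ) (hn : 0 < n) (M : Matrix (Fin n) (Fin n) ℝ)
    (hM : ∀ i j, 0 ≤ M i j)
    (hρ : spectralRadius ℂ (M.map (fun x : ℝ => (x : ℂ))) < 1) (N : Fin n → ℝ) :
    (∃! Pstar : Fin n → ℝ, Pstar + M.mulVec Pstar = N) ∧
      ∀ (S : ℕ → Set (Fin n)), (∀ i : Fin n, ∀ K : ℕ, ∃ k ≥ K, i ∈ S k) →
        ∀ (P : ℕ → Fin n → ℝ),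
          (∀ k, ∀ i ∈ S k, P (k + 1) i = (N - M.mulVec (P k)) i) →
          (∀ k, ∀ i ∉ S k, P (k + 1) i = P k i) →
          ∀ Pstar : Fin n → ℝ, Pstar + M.mulVec Pstar = N →
            Tendsto P atTop (𝓝 Pstar) := by
  haveI : Nonempty (Fin n) := ⟨⟨0, hn⟩⟩
  obtain ⟨w, γ, hw1, hγ0, hγ1, hMw⟩ := aux_weight hn M hM hρ
  have hw0 : ∀ i, 0 < w i := fun i => lt_of_lt_of_le one_pos (hw1 i)
  have hne : (Finset.univ : Finset (Fin n)).Nonempty := Finset.univ_nonempty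
  -- any vector with x = -(M x) is zero
  have hzero : ∀ x : Fin n → ℝ, (∀ i, x i = -(M.mulVec x i)) → x = 0 := by
    intro x hx
    set D : ℝ := Finset.univ.sup' hne (fun i => |x i| / w i) with hD
    have hD0 : 0 ≤ D :=
      le_trans (div_nonneg (abs_nonneg _) (hw0 _).le) (Finset.le_sup' (fun i => |x i| / w i)
        (Finset.mem_univ (Classical.arbitrary (Fin n))))
    have hxb : ∀ j, |x j| ≤ D * w j := fun j =>
      (div_le_iff₀ (hw0 j)).mp (Finset.le_sup' (fun i => |x i| / w i) (Finset.mem_univ j))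
    have hshrunk : ∀ i, |x i| ≤ γ * D * w i := by
      intro i
      rw [hx i, abs_neg]
      exact aux_key M hM w γ hγ0 hMw x D hD0 hxb i
    have hDle : D ≤ γ * D := by
      refine Finset.sup'_le hne _ fun i _ => ?_
      rw [div_le_iff₀ (hw0 i)]
      exact hshrunk i
    have hDzero : D = 0 := by nlinarith
    funext i
    have := hxb i
    rw [hDzero, zero_mul] at this
    have := abs_nonpos_iff.mp this
    simpa using this
  -- existence and uniqueness
  have huniq : ∃! Pstar : Fin n → ℝ, Pstar + M.mulVec Pstar = N := by
    have hinj : Function.Injective ((1 + M).mulVecLin) := by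
      rw [← LinearMap.ker_eq_bot, LinearMap.ker_eq_bot']
      intro x hx
      apply hzero
      intro i
      have hx' : x + M.mulVec x = 0 := by
        simpa [Matrix.mulVecLin_apply] using hx
      have := congrFun hx' i
      simp only [Pi.add_apply, Pi.zero_apply] at this
      linarith
    obtain ⟨Pstar, hPstar⟩ := (LinearMap.injective_iff_surjective.mp hinj) N
    have h1 : Pstar + M.mulVec Pstar = N := by
      simpa [Matrix.mulVecLin_apply] using hPstar
    refine ⟨Pstar, h1, ?_⟩
    · intro Q hQ
      have hQP : ∀ i, (Q - Pstar) i = -(M.mulVec (Q - Pstar) i) := by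
        intro i
        have := congrFun (hQ.trans h1.symm) i
        simp only [Pi.add_apply] at this
        rw [Matrix.mulVec_sub]
        simp only [Pi.sub_apply]
        linarith
      have := hzero _ hQP
      have := sub_eq_zero.mp this
      exact this
  refine ⟨huniq, ?_⟩
  intro S hS P hup hkeep Pstar hPstar
  have hPs : ∀ i, Pstar i = N i - M.mulVec Pstar i := by
    intro i
    have := congrFun hPstar i
    simp only [Pi.add_apply] at this
    linarith
  set E : ℕ → Fin n → ℝ := fun k => P k - Pstar with hE
  have hEup : ∀ k, ∀ i ∈ S k, E (k+1) i = -(M.mulVec (E k) i) := by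
    intro k i hi
    have h1 := hup k i hi
    simp only [hE, Pi.sub_apply, Matrix.mulVec_sub]
    rw [h1, Pi.sub_apply, hPs i]
    ring
  have hEkeep : ∀ k, ∀ i ∉ S k, E (k+1) i = E k i := by
    intro k i hi
    simp only [hE, Pi.sub_apply, hkeep k i hi]
  set D : ℕ → ℝ := fun k => Finset.univ.sup' hne (fun i => |E k i| / w i) with hD
  have hD0 : ∀ k, 0 ≤ D k := fun k =>
    le_trans (div_nonneg (abs_nonneg _) (hw0 _).le) (Finset.le_sup' (fun i => |E k i| / w i)
      (Finset.mem_univ (Classical.arbitrary (Fin n))))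
  have hEle : ∀ k i, |E k i| ≤ D k * w i := fun k i =>
    (div_le_iff₀ (hw0 i)).mp (Finset.le_sup' (fun j => |E k j| / w j) (Finset.mem_univ i))
  have hDle : ∀ k (C : ℝ), (∀ i, |E k i| ≤ C * w i) → D k ≤ C := by
    intro k C hC
    refine Finset.sup'_le hne _ fun i _ => ?_
    rw [div_le_iff₀ (hw0 i)]
    exact hC i
  have hstep : ∀ k i, |E (k+1) i| ≤ D k * w i := by
    intro k i
    by_cases hi : i ∈ S k
    · rw [hEup k i hi, abs_neg]
      calc |M.mulVec (E k) i| ≤ γ * D k * w i :=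
            aux_key M hM w γ hγ0 hMw (E k) (D k) (hD0 k) (hEle k) i
        _ ≤ 1 * D k * w i := by
            have : γ * D k ≤ 1 * D k := mul_le_mul_of_nonneg_right hγ1.le (hD0 k)
            exact mul_le_mul_of_nonneg_right this (hw0 i).le
        _ = D k * w i := by ring
    · rw [hEkeep k i hi]; exact hEle k i
  have hanti : ∀ j k, k ≤ j → D j ≤ D k := by
    have h1 : ∀ k, D (k+1) ≤ D k := fun k => hDle (k+1) (D k) (hstep k)
    intro j k hkj
    induction j with
    | zero => obtain rfl : k = 0 := (by omega); exact le_rfl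
    | succ j ih =>
      rcases Nat.lt_or_ge k (j+1) with h | h
      · exact le_trans (h1 j) (ih (Nat.lt_succ_iff.mp h))
      · have : k = j + 1 := le_antisymm hkj h
        subst this; rfl
  -- one round of full updates shrinks D by γ
  have hround : ∀ k, ∃ K, ∀ t, K ≤ t → D t ≤ γ * D k := by
    intro k
    choose ki hki1 hki2 using fun i => hS i k
    refine ⟨(Finset.univ.sup ki) + 1, ?_⟩
    have hclaim : ∀ i t, ki i < t → |E t i| ≤ γ * D k * w i := by
      intro i t
      induction t with
      | zero => omega
      | succ t ih =>
        intro ht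
        by_cases hi : i ∈ S t
        · rw [hEup t i hi, abs_neg]
          have hDt : D t ≤ D k := hanti t k (le_trans (hki1 i) (Nat.lt_succ_iff.mp ht))
          calc |M.mulVec (E t) i| ≤ γ * D t * w i :=
                aux_key M hM w γ hγ0 hMw (E t) (D t) (hD0 t) (hEle t) i
            _ ≤ γ * D k * w i := by
                have : γ * D t ≤ γ * D k := mul_le_mul_of_nonneg_left hDt hγ0
                exact mul_le_mul_of_nonneg_right this (hw0 i).le
        · rcases Nat.lt_or_ge (ki i) t with h | h
          · rw [hEkeep t i hi]; exact ih h
          · have heq : ki i = t := by omega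
            exact absurd (heq ▸ hki2 i) hi
    intro t ht
    refine hDle t (γ * D k) fun i => ?_
    refine hclaim i t ?_
    have : ki i ≤ Finset.univ.sup ki := Finset.le_sup (Finset.mem_univ i)
    omega
  -- D tends to zero
  have hDtend : Tendsto D atTop (𝓝 0) := by
    choose Kf hKf using hround
    set Kseq : ℕ → ℕ := fun r => Nat.rec 0 (fun r K => Kf K) r with hKseq
    have hKr : ∀ r t, Kseq r ≤ t → D t ≤ γ ^ r * D 0 := by
      intro r
      induction r with
      | zero => intro t ht; simpa using hanti t 0 (Nat.zero_le t)
      | succ r ih =>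
        intro t ht
        have h1 : D t ≤ γ * D (Kseq r) := hKf (Kseq r) t ht
        have h2 : D (Kseq r) ≤ γ ^ r * D 0 := ih (Kseq r) le_rfl
        calc D t ≤ γ * D (Kseq r) := h1
          _ ≤ γ * (γ ^ r * D 0) := mul_le_mul_of_nonneg_left h2 hγ0
          _ = γ ^ (r+1) * D 0 := by ring
    rw [Metric.tendsto_atTop]
    intro ε hε
    have hpow : Tendsto (fun r => γ ^ r * D 0) atTop (𝓝 0) := by
      simpa using (tendsto_pow_atTop_nhds_zero_of_lt_one hγ0 hγ1).mul_const (D 0)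
    obtain ⟨r, hr⟩ := (hpow.eventually_lt_const hε).exists
    refine ⟨Kseq r, fun t ht => ?_⟩
    rw [Real.dist_eq, sub_zero, abs_of_nonneg (hD0 t)]
    exact lt_of_le_of_lt (hKr r t ht) hr
  -- conclude coordinatewise convergence
  rw [tendsto_pi_nhds]
  intro i
  have h1 : Tendsto (fun t => D t * w i) atTop (𝓝 0) := by
    simpa using hDtend.mul_const (w i)
  have h2 : Tendsto (fun t => |E t i|) atTop (𝓝 0) :=
    tendsto_of_tendsto_of_tendsto_of_le_of_le tendsto_const_nhds h1
      (fun t => abs_nonneg _) (fun t => hEle t i)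
  have h3 : Tendsto (fun t => E t i) atTop (𝓝 0) :=
    (tendsto_zero_iff_abs_tendsto_zero (fun t => E t i)).mpr h2
  have h4 : Tendsto (fun t => E t i + Pstar i) atTop (𝓝 (0 + Pstar i)) :=
    h3.add tendsto_const_nhds
  simpa [hE] using h4
end
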